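/- Let T be a tree satisfying Conditions (C1) and (C2), let M and N be two ν-matchings of 𝒩(T), and suppose N_T[r] ∈ M and N_T[t] ∈ N satisfy N_T[r] ∩ N_T[t] = {s} with deg_T(r) ≥ 2 and deg_T(t) ≥ 2 (so r, s, t is a path in T). Then deg_T(s) = 2 in each of the following two cases: (a) letting T_1 be the connected component of T \ {r} containing t, one has |N_{T_1}| = |M_{T_1}| + 1, where M_{T_1} = {F ∈ M : F ⊆ V(T_1)} and N_{T_1} = {F ∈ N : F ⊆ V(T_1)}; (b) N_T[r] is disjoint from every facet of N other than N_T[t]. -/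

import Mathlib

open scoped Classical
open SimpleGraph Finset MvPolynomial

variable {V : Type*}

/-- The closed neighborhood `N_G[u]` of a vertex, as a finite set. -/
noncomputable def closedNbhd [Fintype V] (G : SimpleGraph V) (u : V) : Finset V :=
  insert u (G.neighborFinset u)

/-- `F` is a facet of the closed neighborhood complex `𝒩(G)`:
`F = N_G[u]` for some vertex `u`, and no closed neighborhood of another vertex is
contained in `N_G[u]`. -/
def IsNFacet [Fintype V] (G : SimpleGraph V) (F : Finset V) : Prop :=
  ∃ u : V, F = closedNbhd G u ∧
    ∀ v : V, v ≠ u → ¬ closedNbhd G v ⊆ closedNbhd G u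

/-- A `k`-matching of `𝒩(G)`: a set of `k` pairwise disjoint facets of `𝒩(G)`. -/
def IsNMatching [Fintype V] (G : SimpleGraph V) (k : ℕ) (M : Finset (Finset V)) : Prop :=
  M.card = k ∧ (∀ F ∈ M, IsNFacet G F) ∧
    ∀ F ∈ M, ∀ F' ∈ M, F ≠ F' → Disjoint F F'

/-- The vertex set (inside `V`) of the connected component `c` of the induced subgraph
of `G` on `V \ {u}`. -/
def compVerts [Fintype V] (G : SimpleGraph V) (u : V)
    (c : (SimpleGraph.induce {v : V | v ≠ u} G).ConnectedComponent) : Set V :=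
  {v : V | ∃ h : v ≠ u, (SimpleGraph.induce {v : V | v ≠ u} G).connectedComponentMk ⟨v, h⟩ = c}

/-- For a matching `M` and a set `W` of vertices, the subcollection
`M_W = {F ∈ M : F ⊆ W}`. -/
noncomputable def matchPart (M : Finset (Finset V)) (W : Set V) : Finset (Finset V) :=
  M.filter (fun F => ∀ v ∈ F, v ∈ W)

/-- Condition (C1): `T` does not contain a path `r₁, r, s, t, t₁` with `deg_T(s) ≥ 3`
together with a `(ν−1)`-matching `Y` such that `{N_T[r]} ∪ Y` and `{N_T[t]} ∪ Y` are two
distinct `ν`-matchings of `𝒩(T)`. -/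
def CondC1 [Fintype V] (G : SimpleGraph V) (ν : ℕ) : Prop :=
  ¬ ∃ r1 r s t t1 : V,
      List.Pairwise (· ≠ ·) [r1, r, s, t, t1] ∧
      G.Adj r1 r ∧ G.Adj r s ∧ G.Adj s t ∧ G.Adj t t1 ∧
      3 ≤ G.degree s ∧
      ∃ Y : Finset (Finset V),
        IsNMatching G (ν - 1) Y ∧
        IsNMatching G ν (insert (closedNbhd G r) Y) ∧
        IsNMatching G ν (insert (closedNbhd G t) Y) ∧
        insert (closedNbhd G r) Y ≠ insert (closedNbhd G t) Y

/-- Condition (C2): `T` does not contain a path `p₁ = r, p₂, …, p_{3n−1} = s` (`n ≥ 1`,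
indexed here from `0` to `3n−2`) with `deg_T(r) ≥ 3` and `deg_T(s) ≥ 3` together with a
`(ν−n)`-matching `Y` such that `{N_T[p₁], N_T[p₄], …, N_T[p_{3n−2}]} ∪ Y` and
`{N_T[p₂], N_T[p₅], …, N_T[p_{3n−1}]} ∪ Y` are both `ν`-matchings of `𝒩(T)`. -/
def CondC2 [Fintype V] (G : SimpleGraph V) (ν : ℕ) : Prop :=
  ¬ ∃ (n : ℕ) (p : ℕ → V),
      1 ≤ n ∧
      (∀ i j, i < 3 * n - 1 → j < 3 * n - 1 → p i = p j → i = j) ∧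
      (∀ i, i + 1 < 3 * n - 1 → G.Adj (p i) (p (i + 1))) ∧
      3 ≤ G.degree (p 0) ∧ 3 ≤ G.degree (p (3 * n - 2)) ∧
      ∃ Y : Finset (Finset V),
        IsNMatching G (ν - n) Y ∧
        IsNMatching G ν ((Finset.range n).image (fun i => closedNbhd G (p (3 * i))) ∪ Y) ∧
        IsNMatching G ν ((Finset.range n).image (fun i => closedNbhd G (p (3 * i + 1))) ∪ Y)

/-!
In both cases we build a `(ν - 1)`-matching `Y` such that `{N_T[r]} ∪ Y` and `{N_T[t]} ∪ Y`
are `ν`-matchings; they are distinct since `N_T[r]` and `N_T[t]` share `s`. If `deg_T(s) ≥ 3`,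
neighbours `r₁ ≠ s` of `r` and `t₁ ≠ s` of `t` complete a path `r₁, r, s, t, t₁`, contradicting
(C1). In case (b) take `Y = N \ {N_T[t]}`. In case (a) take the facets of `N` inside `T₁` other
than `N_T[t]` together with the facets of `M` other than `N_T[r]` that are not inside `T₁`; the
latter avoid `T₁` entirely, the cardinality hypothesis gives `|Y| = ν - 1`, and since `s` is the
only neighbour of `r` in `T₁`, the facets taken from `N` miss `N_T[r]`.
-/

lemma mem_matchPart {M : Finset (Finset V)} {W : Set V} {F : Finset V} :
    F ∈ matchPart M W ↔ F ∈ M ∧ ∀ v ∈ F, v ∈ W := by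
  simp [matchPart]

lemma matchPart_subset (M : Finset (Finset V)) (W : Set V) : matchPart M W ⊆ M :=
  Finset.filter_subset _ M

section Matching

variable [Fintype V] {G : SimpleGraph V} {k l : ℕ} {u v : V} {F F' : Finset V}
  {M A B : Finset (Finset V)}

lemma mem_closedNbhd : v ∈ closedNbhd G u ↔ v = u ∨ G.Adj u v := by
  simp [closedNbhd]

lemma self_mem_closedNbhd (u : V) : u ∈ closedNbhd G u := by
  simp [closedNbhd]

lemma IsNFacet.nonempty (hF : IsNFacet G F) : F.Nonempty := by
  obtain ⟨u, rfl, -⟩ := hF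
  exact ⟨u, self_mem_closedNbhd u⟩

lemma IsNMatching.disjoint (hM : IsNMatching G k M) (hF : F ∈ M) (hF' : F' ∈ M)
    (hne : F ≠ F') : Disjoint F F' :=
  hM.2.2 F hF F' hF' hne

lemma IsNMatching.eq_of_mem_of_mem (hM : IsNMatching G k M) (hF : F ∈ M) (hF' : F' ∈ M)
    (hv : v ∈ F) (hv' : v ∈ F') : F = F' := by
  by_contra hne
  exact Finset.disjoint_left.mp (hM.disjoint hF hF' hne) hv hv'

lemma IsNMatching.subset (hM : IsNMatching G k M) (hA : A ⊆ M) : IsNMatching G #A A :=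
  ⟨rfl, fun F hF => hM.2.1 F (hA hF), fun F hF F' hF' => hM.2.2 F (hA hF) F' (hA hF')⟩

lemma IsNMatching.erase (hM : IsNMatching G k M) (hF : F ∈ M) :
    IsNMatching G (k - 1) (M.erase F) := by
  have h := hM.subset (Finset.erase_subset F M)
  rwa [Finset.card_erase_of_mem hF, hM.1] at h

lemma IsNMatching.union (hA : IsNMatching G k A) (hB : IsNMatching G l B)
    (hAB : ∀ F ∈ A, ∀ F' ∈ B, Disjoint F F') : IsNMatching G (k + l) (A ∪ B) := by
  have hdisj : Disjoint A B := Finset.disjoint_left.mpr fun F hFA hFB =>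
    (hA.2.1 F hFA).nonempty.ne_empty ((Finset.disjoint_self_iff_empty F).mp (hAB F hFA F hFB))
  refine ⟨by rw [Finset.card_union_of_disjoint hdisj, hA.1, hB.1], ?_, ?_⟩
  · intro F hF
    rcases Finset.mem_union.mp hF with hF | hF
    exacts [hA.2.1 F hF, hB.2.1 F hF]
  · intro F hF F' hF' hne
    rcases Finset.mem_union.mp hF with hF | hF <;> rcases Finset.mem_union.mp hF' with hF' | hF'
    exacts [hA.disjoint hF hF' hne, hAB F hF F' hF', (hAB F' hF' F hF).symm,
      hB.disjoint hF hF' hne]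

lemma IsNMatching.insert_of_forall_disjoint (hM : IsNMatching G k M) (hF : IsNFacet G F)
    (hFM : ∀ F' ∈ M, Disjoint F F') : IsNMatching G (k + 1) (insert F M) := by
  rw [Finset.insert_eq, add_comm]
  exact IsNMatching.union ⟨Finset.card_singleton F, by simpa, by simp⟩ hM (by simpa)

end Matching

section Components

variable [Fintype V] {G : SimpleGraph V} {r u v w : V}
  {c : (G.induce {v : V | v ≠ r}).ConnectedComponent}

lemma mem_compVerts_connectedComponentMk (h : v ≠ r) :
    v ∈ compVerts G r ((G.induce {v : V | v ≠ r}).connectedComponentMk ⟨v, h⟩) :=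
  ⟨h, rfl⟩

lemma self_notMem_compVerts : r ∉ compVerts G r c :=
  fun ⟨h, _⟩ => h rfl

lemma mem_compVerts_of_adj (hv : v ∈ compVerts G r c) (hvw : G.Adj v w) (hw : w ≠ r) :
    w ∈ compVerts G r c := by
  obtain ⟨hvr, rfl⟩ := hv
  exact ⟨hw, (ConnectedComponent.sound (by simpa using hvw.symm : (G.induce _).Adj
    ⟨w, hw⟩ ⟨v, hvr⟩).reachable)⟩

lemma closedNbhd_subset_compVerts (hru : r ∉ closedNbhd G u) (hv : v ∈ closedNbhd G u)
    (hvc : v ∈ compVerts G r c) : ∀ w ∈ closedNbhd G u, w ∈ compVerts G r c := by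
  have hne : ∀ {w}, w ∈ closedNbhd G u → w ≠ r := fun hw h => hru (h ▸ hw)
  have huc : u ∈ compVerts G r c := by
    rcases mem_closedNbhd.mp hv with rfl | huv
    exacts [hvc, mem_compVerts_of_adj hvc huv.symm (hne (self_mem_closedNbhd u))]
  intro w hw
  rcases mem_closedNbhd.mp hw with rfl | huw
  exacts [huc, mem_compVerts_of_adj huc huw (hne hw)]

end Components

section Tree

variable [Fintype V] {G : SimpleGraph V} {r s t u v w : V}
  {c : (G.induce {v : V | v ≠ r}).ConnectedComponent}

/-- In a tree every edge `rv` is a bridge, so a walk `r → w ⇝ v` whose tail avoids `r`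
must start with that edge. -/
lemma SimpleGraph.IsTree.eq_of_adj_of_mem_compVerts (hT : G.IsTree) (hrv : G.Adj r v)
    (hrw : G.Adj r w)     (hv : v ∈ compVerts G r c) (hw : w ∈ compVerts G r c) : v = w := by
  obtain ⟨hvr, hvc⟩ := hv
  obtain ⟨hwr, hwc⟩ := hw
  obtain ⟨p⟩ := ConnectedComponent.exact (hwc.trans hvc.symm)
  let q : G.Walk w v := p.map (Embedding.induce _).toHom
  have hrq : r ∉ q.support := by
    rw [show q.support = _ from Walk.support_map _ p, List.mem_map]
    rintro ⟨x, -, hx⟩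
    exact x.2 hx
  have hedge := isBridge_iff_forall_walk_mem_edges.mp
    (isAcyclic_iff_forall_adj_isBridge.mp hT.isAcyclic hrv) (Walk.cons hrw q)
  rcases List.mem_cons.mp (Walk.edges_cons hrw q ▸ hedge) with h | h
  · simp only [Sym2.eq_iff, true_and] at h
    exact h.resolve_right fun h' => hvr h'.2
  · exact absurd (q.fst_mem_support_of_mem_edges h) hrq

lemma SimpleGraph.IsTree.not_adj_of_adj_of_adj (hT : G.IsTree) (hrs : G.Adj r s)
    (hst : G.Adj s t) (hrt : t ≠ r) : ¬ G.Adj r t := fun hrt' =>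
  hst.ne (hT.eq_of_adj_of_mem_compVerts hrs hrt'
    (mem_compVerts_of_adj (mem_compVerts_connectedComponentMk hrt) hst.symm hrs.ne')
    (mem_compVerts_connectedComponentMk hrt))

lemma SimpleGraph.IsTree.disjoint_closedNbhd_of_subset_compVerts (hT : G.IsTree)
    (hrs : G.Adj r s) (hs : s ∈ compVerts G r c) {F : Finset V} (hF : ∀ v ∈ F, v ∈ compVerts G r c)
    (hsF : s ∉ F) : Disjoint (closedNbhd G r) F := by
  refine Finset.disjoint_left.mpr fun v hvr hvF => ?_
  rcases mem_closedNbhd.mp hvr with rfl | hrv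
  · exact self_notMem_compVerts (hF v hvF)
  · exact hsF (hT.eq_of_adj_of_mem_compVerts hrv hrs (hF v hvF) hs ▸ hvF)

lemma SimpleGraph.exists_adj_ne_of_two_le_degree (h : 2 ≤ G.degree u) (w : V) :
    ∃ v, G.Adj u v ∧ v ≠ w := by
  have h' : 1 < #(G.neighborFinset u) := by rw [card_neighborFinset_eq_degree]; omega
  obtain ⟨v, hv, hvw⟩ := Finset.exists_mem_ne h' w
  exact ⟨v, (mem_neighborFinset G u v).mp hv, hvw⟩

lemma SimpleGraph.IsTree.exists_path_five (hT : G.IsTree) (hrs : G.Adj r s) (hst : G.Adj s t)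
    (hrt : t ≠ r) (hdr : 2 ≤ G.degree r) (hdt : 2 ≤ G.degree t) :
    ∃ r₁ t₁, List.Pairwise (· ≠ ·) [r₁, r, s, t, t₁] ∧ G.Adj r₁ r ∧ G.Adj t t₁ := by
  obtain ⟨r₁, hrr₁, hr₁s⟩ := exists_adj_ne_of_two_le_degree hdr s
  obtain ⟨t₁, htt₁, ht₁s⟩ := exists_adj_ne_of_two_le_degree hdt s
  have hnrt := hT.not_adj_of_adj_of_adj hrs hst hrt
  have hr₁t : r₁ ≠ t := fun h => hnrt (h ▸ hrr₁)
  have ht₁r : t₁ ≠ r := fun h => hnrt (h ▸ htt₁).symm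
  have htC := mem_compVerts_connectedComponentMk (G := G) hrt
  have hr₁t₁ : r₁ ≠ t₁ := by
    rintro rfl
    exact hr₁s (hT.eq_of_adj_of_mem_compVerts hrr₁ hrs (mem_compVerts_of_adj htC htt₁ ht₁r)
      (mem_compVerts_of_adj htC hst.symm hrs.ne'))
  refine ⟨r₁, t₁, ?_, hrr₁.symm, htt₁⟩
  simp [hrr₁.ne', hr₁s, hr₁t, hr₁t₁, hrs.ne, hrt.symm, ht₁r.symm, hst.ne, ht₁s.symm, htt₁.ne]

end Tree

section Exchange

variable [Fintype V] {G : SimpleGraph V} {ν : ℕ} {r s t : V} {M N Y : Finset (Finset V)}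
  {c : (G.induce {v : V | v ≠ r}).ConnectedComponent}

lemma IsNMatching.forall_notMem_compVerts (hM : IsNMatching G ν M) (hrM : closedNbhd G r ∈ M)
    {F : Finset V} (hF : F ∈ M \ insert (closedNbhd G r) (matchPart M (compVerts G r c))) :
    ∀ v ∈ F, v ∉ compVerts G r c := by
  obtain ⟨hFM, hFrC⟩ := Finset.mem_sdiff.mp hF
  rw [Finset.mem_insert, not_or] at hFrC
  obtain ⟨u, rfl, -⟩ := hM.2.1 F hFM
  intro v hv hvC
  have hru : r ∉ closedNbhd G u := fun h =>
    hFrC.1 (hM.eq_of_mem_of_mem hFM hrM h (self_mem_closedNbhd r))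
  exact hFrC.2 (mem_matchPart.mpr ⟨hFM, closedNbhd_subset_compVerts hru hv hvC⟩)

lemma SimpleGraph.IsTree.exists_exchange_of_card_matchPart (hT : G.IsTree)
    (hM : IsNMatching G ν M) (hN : IsNMatching G ν N) (hrM : closedNbhd G r ∈ M)
    (htN : closedNbhd G t ∈ N) (hrs : G.Adj r s) (hst : G.Adj s t) (hrt : t ≠ r)
    (ht : t ∈ compVerts G r c)
    (hcard : #(matchPart N (compVerts G r c)) = #(matchPart M (compVerts G r c)) + 1) :
    ∃ Y, IsNMatching G (ν - 1) Y ∧ IsNMatching G ν (insert (closedNbhd G r) Y) ∧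
      IsNMatching G ν (insert (closedNbhd G t) Y) := by
  set C := compVerts G r c
  have hrNt : r ∉ closedNbhd G t := fun h => (mem_closedNbhd.mp h).elim hrt.symm
    fun hadj => hT.not_adj_of_adj_of_adj hrs hst hrt hadj.symm
  have hsNt : s ∈ closedNbhd G t := mem_closedNbhd.mpr (Or.inr hst.symm)
  have htC : ∀ v ∈ closedNbhd G t, v ∈ C :=
    closedNbhd_subset_compVerts hrNt (self_mem_closedNbhd t) ht
  have hrP : closedNbhd G r ∉ matchPart M C := fun h =>
    self_notMem_compVerts ((mem_matchPart.mp h).2 r (self_mem_closedNbhd r))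
  set Outer := M \ insert (closedNbhd G r) (matchPart M C)
  set Inner := (matchPart N C).erase (closedNbhd G t)
  have hInner : ∀ F ∈ Inner, F ∈ N ∧ F ≠ closedNbhd G t ∧ ∀ v ∈ F, v ∈ C := fun F hF =>
    have hFN := mem_matchPart.mp (Finset.mem_of_mem_erase hF)
    ⟨hFN.1, Finset.ne_of_mem_erase hF, hFN.2⟩
  have hOuter_card : #Outer + (#(matchPart M C) + 1) = ν := by
    rw [← Finset.card_insert_of_notMem hrP, ← hM.1]
    exact Finset.card_sdiff_add_card_eq_card (Finset.insert_subset hrM (matchPart_subset M C))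
  have hY : IsNMatching G (ν - 1) (Outer ∪ Inner) := by
    have h : IsNMatching G (#Outer + (#(matchPart N C) - 1)) (Outer ∪ Inner) :=
      (hM.subset Finset.sdiff_subset).union
        ((hN.subset (matchPart_subset N C)).erase (mem_matchPart.mpr ⟨htN, htC⟩))
        fun F hF F' hF' => Finset.disjoint_left.mpr fun v hv hv' =>
          hM.forall_notMem_compVerts hrM hF v hv ((hInner F' hF').2.2 v hv')
    convert h using 2
    omega
  have hν : ν - 1 + 1 = ν := by omega
  refine ⟨Outer ∪ Inner, hY, hν ▸ hY.insert_of_forall_disjoint (hM.2.1 _ hrM) ?_,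
    hν ▸ hY.insert_of_forall_disjoint (hN.2.1 _ htN) ?_⟩ <;> intro F hF <;>
    rcases Finset.mem_union.mp hF with hF | hF
  · have hF' := Finset.mem_sdiff.mp hF
    exact hM.disjoint hrM hF'.1 fun h => hF'.2 (h ▸ Finset.mem_insert_self _ _)
  · obtain ⟨hFN, hFt, hFC⟩ := hInner F hF
    exact hT.disjoint_closedNbhd_of_subset_compVerts hrs (htC s hsNt) hFC
      fun hsF => hFt (hN.eq_of_mem_of_mem hFN htN hsF hsNt)
  · exact Finset.disjoint_left.mpr fun v hv hv' =>
      hM.forall_notMem_compVerts hrM hF v hv' (htC v hv)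
  · obtain ⟨hFN, hFt, -⟩ := hInner F hF
    exact hN.disjoint htN hFN hFt.symm

lemma IsNMatching.exists_exchange_of_disjoint (hN : IsNMatching G ν N)
    (htN : closedNbhd G t ∈ N) (hr : IsNFacet G (closedNbhd G r))
    (hdisj : ∀ F ∈ N, F ≠ closedNbhd G t → Disjoint (closedNbhd G r) F) :
    ∃ Y, IsNMatching G (ν - 1) Y ∧ IsNMatching G ν (insert (closedNbhd G r) Y) ∧
      IsNMatching G ν (insert (closedNbhd G t) Y) := by
  have hν : ν - 1 + 1 = ν := Nat.sub_add_cancel (hN.1 ▸ Finset.card_pos.mpr ⟨_, htN⟩)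
  refine ⟨N.erase (closedNbhd G t), hN.erase htN, ?_, by rwa [Finset.insert_erase htN]⟩
  exact hν ▸ (hN.erase htN).insert_of_forall_disjoint hr fun F hF =>
    hdisj F (Finset.mem_of_mem_erase hF) (Finset.ne_of_mem_erase hF)

theorem SimpleGraph.IsTree.degree_eq_two_of_exchange (hT : G.IsTree) (hC1 : CondC1 G ν)
    (hrs : G.Adj r s) (hst : G.Adj s t) (hrt : t ≠ r) (hdr : 2 ≤ G.degree r)
    (hdt : 2 ≤ G.degree t) (hY : IsNMatching G (ν - 1) Y)
    (hYr : IsNMatching G ν (insert (closedNbhd G r) Y))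
    (hYt : IsNMatching G ν (insert (closedNbhd G t) Y)) : G.degree s = 2 := by
  have hs2 : 2 ≤ G.degree s := by
    rw [← card_neighborFinset_eq_degree]
    exact Finset.one_lt_card.mpr ⟨r, (mem_neighborFinset G s r).mpr hrs.symm, t,
      (mem_neighborFinset G s t).mpr hst, hrt.symm⟩
  refine le_antisymm (not_lt.mp fun hs3 => hC1 ?_) hs2
  obtain ⟨r₁, t₁, hpath, hr₁r, htt₁⟩ := hT.exists_path_five hrs hst hrt hdr hdt
  refine ⟨r₁, r, s, t, t₁, hpath, hr₁r, hrs, hst, htt₁, hs3, Y, hY, hYr, hYt, fun h => ?_⟩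
  have htY : closedNbhd G t ∈ insert (closedNbhd G r) Y := h ▸ Finset.mem_insert_self _ _
  have hrt' := hYr.eq_of_mem_of_mem (Finset.mem_insert_self _ _) htY
    (mem_closedNbhd.mpr (Or.inr hrs)) (mem_closedNbhd.mpr (Or.inr hst.symm))
  exact hT.not_adj_of_adj_of_adj hrs hst hrt
    ((mem_closedNbhd.mp (hrt' ▸ self_mem_closedNbhd t)).resolve_left hrt)

end Exchange

theorem degree_eq_two_of_conditions_general
    [Fintype V] (G : SimpleGraph V) (hT : G.IsTree)
    (ν : ℕ)
    (hC1 : CondC1 G ν)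
    (M N : Finset (Finset V)) (hM : IsNMatching G ν M) (hN : IsNMatching G ν N)
    (r s t : V) (hrM : closedNbhd G r ∈ M) (htN : closedNbhd G t ∈ N)
    (hdr : 2 ≤ G.degree r) (hdt : 2 ≤ G.degree t)
    (hrs : G.Adj r s) (hst : G.Adj s t) (hrt : t ≠ r) :
    ((matchPart N (compVerts G r
          ((SimpleGraph.induce {v : V | v ≠ r} G).connectedComponentMk ⟨t, hrt⟩))).card =
        (matchPart M (compVerts G r
          ((SimpleGraph.induce {v : V | v ≠ r} G).connectedComponentMk ⟨t, hrt⟩))).card + 1 →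
      G.degree s = 2) ∧
    ((∀ F ∈ N, F ≠ closedNbhd G t → Disjoint (closedNbhd G r) F) →
      G.degree s = 2) := by
  constructor
  · intro hcard
    obtain ⟨Y, hY, hYr, hYt⟩ := hT.exists_exchange_of_card_matchPart hM hN hrM htN hrs hst hrt
      (mem_compVerts_connectedComponentMk hrt) hcard
    exact hT.degree_eq_two_of_exchange hC1 hrs hst hrt hdr hdt hY hYr hYt
  · intro hdisj
    obtain ⟨Y, hY, hYr, hYt⟩ := hN.exists_exchange_of_disjoint htN (hM.2.1 _ hrM) hdisj
    exact hT.degree_eq_two_of_exchange hC1 hrs hst hrt hdr hdt hY hYr hYt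

/-- Remark 4.1: let `T` be a tree satisfying (C1) and (C2), let `M`, `N` be `ν`-matchings
with `N_T[r] ∈ M`, `N_T[t] ∈ N`, `N_T[r] ∩ N_T[t] = {s}` and `deg_T(r), deg_T(t) ≥ 2`
(so that `r, s, t` is a path in `T`).  Then `deg_T(s) = 2` in each of the two cases:
(a) `|N_{T₁}| = |M_{T₁}| + 1` for the connected component `T₁` of `T \ {r}` containing
`t`; (b) `N_T[r]` is disjoint from every facet of `N` other than `N_T[t]`. -/
theorem degree_eq_two_of_conditions
    [Fintype V] (G : SimpleGraph V) (hT : G.IsTree)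
    (ν : ℕ) (hν : ∀ k M, IsNMatching G k M → k ≤ ν)
    (hC1 : CondC1 G ν) (hC2 : CondC2 G ν)
    (M N : Finset (Finset V)) (hM : IsNMatching G ν M) (hN : IsNMatching G ν N)
    (r s t : V) (hrM : closedNbhd G r ∈ M) (htN : closedNbhd G t ∈ N)
    (hint : closedNbhd G r ∩ closedNbhd G t = {s})
    (hdr : 2 ≤ G.degree r) (hdt : 2 ≤ G.degree t)
    (hrs : G.Adj r s) (hst : G.Adj s t) (hrt : t ≠ r) :
    ((matchPart N (compVerts G r
          ((SimpleGraph.induce {v : V | v ≠ r} G).connectedComponentMk ⟨t, hrt⟩))).card =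
        (matchPart M (compVerts G r
          ((SimpleGraph.induce {v : V | v ≠ r} G).connectedComponentMk ⟨t, hrt⟩))).card + 1 →
      G.degree s = 2) ∧
    ((∀ F ∈ N, F ≠ closedNbhd G t → Disjoint (closedNbhd G r) F) →
      G.degree s = 2) :=
  degree_eq_two_of_conditions_general G hT ν hC1 M N hM hN r s t hrM htN hdr hdt hrs hst hrt
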